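/- Every monotone convex bipartite graph has a Hamiltonian path. -/

import Mathlib

open Finset SimpleGraph

/-- A convex bipartite graph with parts `X = Fin n` (with its natural order giving the
convex ordering) and `Y`: each `y : Y` has a consecutive neighborhood in `Fin n`. -/
structure ConvexBip (n : ℕ) (Y : Type*) where
  adj : Fin n → Y → Prop
  convex : ∀ (y : Y) (i₁ i₂ i₃ : Fin n),
    i₁ ≤ i₂ → i₂ ≤ i₃ → adj i₁ y → adj i₃ y → adj i₂ y

namespace ConvexBip

variable {n : ℕ} {Y : Type*}

/-- The underlying bipartite simple graph on `Fin n ⊕ Y`. -/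
def toGraph (G : ConvexBip n Y) : SimpleGraph (Fin n ⊕ Y) where
  Adj u v := (∃ i y, u = Sum.inl i ∧ v = Sum.inr y ∧ G.adj i y) ∨
             (∃ i y, u = Sum.inr y ∧ v = Sum.inl i ∧ G.adj i y)
  symm := by constructor; rintro u v (⟨i, y, rfl, rfl, h⟩ | ⟨i, y, rfl, rfl, h⟩)
             · exact Or.inr ⟨i, y, rfl, rfl, h⟩
             · exact Or.inl ⟨i, y, rfl, rfl, h⟩
  loopless := by constructor; rintro u (⟨i, y, rfl, h, _⟩ | ⟨i, y, rfl, h, _⟩) <;> simp_all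

/-- `N_G[X_{p..q}]`: the set of `y ∈ Y` whose whole neighborhood lies in `{x_p, …, x_q}`. -/
def NIn (G : ConvexBip n Y) (p q : Fin n) : Set Y :=
  {y | ∀ i, G.adj i y → p ≤ i ∧ i ≤ q}

/-- `N'_G[X_{p..q}]`: the set of `y ∈ Y` having at least two neighbors in `{x_p, …, x_q}`. -/
noncomputable def NIn' (G : ConvexBip n Y) (p q : Fin n) : Set Y :=
  {y | 2 ≤ {i : Fin n | G.adj i y ∧ p ≤ i ∧ i ≤ q}.ncard}

/-- Degree of a vertex `y ∈ Y`. -/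
noncomputable def degY (G : ConvexBip n Y) (y : Y) : ℕ := {i : Fin n | G.adj i y}.ncard

/-- Property A. -/
def PropertyA (G : ConvexBip n Y) : Prop :=
  (∀ p q : Fin n, p < q →
      ((p.val = 0 ∧ q.val < n - 1) ∨ (0 < p.val ∧ q.val = n - 1) ∨
        (0 < p.val ∧ q.val < n - 1)) →
      (G.NIn p q).ncard ≤ q.val - p.val) ∧
  (∀ (k : ℕ) (p q : Fin k → Fin n), 1 ≤ k → k ≤ n - 1 →
      (∀ i, p i < q i) → (∀ i i' : Fin k, i < i' → q i ≤ p i') →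
      (∑ i, ((q i).val - (p i).val)) ≤ (⋃ i, G.NIn' (p i) (q i)).ncard) ∧
  (∀ hn : 0 < n,
      (G.NIn ⟨0, hn⟩ ⟨n - 1, by omega⟩).ncard = n ∧
      (G.NIn' ⟨0, hn⟩ ⟨n - 1, by omega⟩).ncard = n)

/-- Property B. -/
def PropertyB (G : ConvexBip n Y) : Prop :=
  (∀ p q : Fin n, p < q →
      ((p.val = 0 ∧ q.val < n - 1) ∨ (0 < p.val ∧ q.val = n - 1) ∨
        (0 < p.val ∧ q.val < n - 1)) →
      (G.NIn p q).ncard ≤ q.val - p.val + 1) ∧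
  (∀ hn : 0 < n, (G.NIn ⟨0, hn⟩ ⟨n - 1, by omega⟩).ncard ≤ n + 1) ∧
  (∀ (k : ℕ) (p q : Fin k → Fin n), 1 ≤ k → k ≤ n - 1 →
      (∀ i, p i < q i) → (∀ i i' : Fin k, i < i' → q i ≤ p i') →
      (∑ i, ((q i).val - (p i).val)) ≤ (⋃ i, G.NIn' (p i) (q i)).ncard) ∧
  ({y : Y | G.degY y = 1}.ncard ≤ 2 ∧
    (2 ≤ n → ∀ (i : Fin n) (y y' : Y), y ≠ y' → G.degY y = 1 → G.degY y' = 1 →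
      G.adj i y → G.adj i y' → False))

/-- The interval `X_{p..q}` is maximal: `|N_G[X_{p..q}]| = q - p + 1` and no strictly
larger interval (within indices 2..n-1) has the analogous property. -/
def IsMaximalInt (G : ConvexBip n Y) (p q : Fin n) : Prop :=
  (G.NIn p q).ncard = q.val - p.val + 1 ∧
  ¬ ∃ p' q' : Fin n, 0 < p'.val ∧ q'.val < n - 1 ∧ p' ≤ p ∧ q ≤ q' ∧
      (p' < p ∨ q < q') ∧ (G.NIn p' q').ncard = q'.val - p'.val + 1

/-- Monotone convex bipartite graph. -/
def IsMonotone (G : ConvexBip n Y) : Prop :=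
  G.PropertyB ∧
  (¬ ∃ (y : Y) (k : Fin n), G.degY y = 1 ∧ G.adj k y ∧ 0 < k.val ∧ k.val < n - 1) ∧
  (¬ ∃ p q : Fin n, 0 < p.val ∧ p < q ∧ q.val < n - 1 ∧ G.IsMaximalInt p q)

/-- Non-monotone convex bipartite graph (satisfying Property B). -/
def IsNonMonotone (G : ConvexBip n Y) : Prop :=
  G.PropertyB ∧
  ((∃ (y : Y) (k : Fin n), G.degY y = 1 ∧ G.adj k y ∧ 0 < k.val ∧ k.val < n - 1) ∨
   (∃ p q : Fin n, 0 < p.val ∧ p < q ∧ q.val < n - 1 ∧ G.IsMaximalInt p q))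

/-- The interval graph obtained from `G`: keep all edges of `G` and make two distinct
`Y`-vertices adjacent whenever their neighborhoods in `X` intersect. -/
def intervalGraph (G : ConvexBip n Y) : SimpleGraph (Fin n ⊕ Y) where
  Adj u v := G.toGraph.Adj u v ∨
    (∃ y y', u = Sum.inr y ∧ v = Sum.inr y' ∧ y ≠ y' ∧ ∃ i, G.adj i y ∧ G.adj i y')
  symm := by
    constructor
    rintro u v (h | ⟨y, y', rfl, rfl, hne, i, h1, h2⟩)
    · exact Or.inl h.symm
    · exact Or.inr ⟨y', y, rfl, rfl, hne.symm, i, h2, h1⟩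
  loopless := by
    constructor
    rintro u (h | ⟨y, y', rfl, h, hne, _⟩)
    · exact G.toGraph.loopless.irrefl u h
    · exact hne (Sum.inr.inj h)

/-- `G` has a Hamiltonian cycle. -/
def HasHamCycle {V : Type*} [DecidableEq V] (H : SimpleGraph V) : Prop :=
  ∃ (v : V) (c : H.Walk v v), c.IsHamiltonianCycle

/-- `G` has a Hamiltonian path. -/
def HasHamPath {V : Type*} [DecidableEq V] (H : SimpleGraph V) : Prop :=
  ∃ (u v : V) (p : H.Walk u v), p.IsHamiltonian

/-- A maximal clique of a simple graph. -/
def IsMaxClique {V : Type*} (H : SimpleGraph V) (s : Set V) : Prop :=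
  H.IsClique s ∧ ∀ t : Set V, H.IsClique t → s ⊆ t → s = t

end ConvexBip



/-!
Place `x_0, …, x_{n-1}` on a line and think of the gaps between consecutive vertices as *slots*,
with one extra slot before `x_0` and one after `x_{n-1}`. A Hamiltonian path is obtained by putting
every `y ∈ Y` into a slot whose two sides it is adjacent to, one `y` per slot and every inner slot
filled; such a filling is a matching, found by Hall's theorem. For a set of slots containing no
end slot, Hall's condition is Property B (2). Otherwise, doubling `x_0` and `x_{n-1}` turns the end
slots into ordinary gaps, and Hall's condition becomes a counting statement for vertices whose
neighbourhood avoids a set of gaps. Cutting the line at those gaps reduces it to the bound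
`|N[X_{p..q}]| ≤ q - p + [p = 1] + [q = n]` on each piece, which is what Property B and the two
monotonicity conditions give.
-/

theorem ncard_spanning_none_add_card_le {ι : Type*} [Finite ι] (R : ℕ → ι → Prop)
    (hconv : ∀ i {a b c}, a ≤ b → b ≤ c → R a i → R c i → R b i) {c : ℕ}
    (hwin : ∀ a b, a ≤ b → b ≤ c → {i | ∀ k, R k i → a ≤ k ∧ k ≤ b}.ncard ≤ b - a)
    (S : Finset ℕ) (hS : ∀ g ∈ S, g < c) :
    {i | (∀ k, R k i → k ≤ c) ∧ ∀ g ∈ S, ¬(R g i ∧ R (g + 1) i)}.ncard + #S ≤ c := by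
  induction S using Finset.induction_on_max generalizing c with
  | empty => simpa using hwin 0 c (Nat.zero_le c) le_rfl
  | insert g S hlt ih =>
    have hgc : g < c := hS g (mem_insert_self g S)
    have hsplit : {i | (∀ k, R k i → k ≤ c) ∧ ∀ h ∈ insert g S, ¬(R h i ∧ R (h + 1) i)} ⊆
        {i | (∀ k, R k i → k ≤ g) ∧ ∀ h ∈ S, ¬(R h i ∧ R (h + 1) i)} ∪
          {i | ∀ k, R k i → g + 1 ≤ k ∧ k ≤ c} := by
      rintro i ⟨hc, hav⟩
      rw [Finset.forall_mem_insert] at hav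
      by_cases hle : ∀ k, R k i → k ≤ g
      · exact Or.inl ⟨hle, hav.2⟩
      · obtain ⟨k₁, hk₁, hgk₁⟩ : ∃ k, R k i ∧ g < k := by simpa using hle
        refine Or.inr fun k hk => ⟨?_, hc k hk⟩
        -- by convexity, points on both sides of `g` would span the gap `g`
        by_contra! hkg
        exact hav.1 ⟨hconv i (by omega) hgk₁.le hk hk₁, hconv i (by omega) hgk₁ hk hk₁⟩
    have hleft := ih (fun a b hab hb => hwin a b hab (by omega)) hlt
    have hright := hwin (g + 1) c hgc le_rfl
    have hcard : #(insert g S) = #S + 1 := card_insert_of_notMem fun hg => (hlt g hg).false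
    calc _ ≤ _ := Nat.add_le_add_right
          ((Set.ncard_le_ncard hsplit).trans (Set.ncard_union_le _ _)) _
      _ ≤ c := by omega

namespace ConvexBip

lemma hasHamPath_of_isChain {V : Type*} [DecidableEq V] {H : SimpleGraph V} (l : List V)
    (hne : l ≠ []) (hchain : l.IsChain H.Adj) (hnodup : l.Nodup) (hmem : ∀ v, v ∈ l) :
    HasHamPath H :=
  ⟨_, _, Walk.ofSupport l hne hchain, fun v => by
    rw [Walk.support_ofSupport]; exact List.count_eq_one_of_mem hnodup (hmem v)⟩

variable {n : ℕ} {Y : Type*} {G : ConvexBip n Y}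

@[simp]
lemma toGraph_adj_inl_inr {i : Fin n} {y : Y} : G.toGraph.Adj (.inl i) (.inr y) ↔ G.adj i y := by
  simp [toGraph]

@[simp]
lemma toGraph_adj_inr_inl {i : Fin n} {y : Y} : G.toGraph.Adj (.inr y) (.inl i) ↔ G.adj i y := by
  simp [toGraph]

lemma exists_adj_of_connected (hconn : G.toGraph.Connected) (hn : 0 < n) (y : Y) :
    ∃ i, G.adj i y := by
  obtain ⟨w⟩ := hconn.preconnected (.inr y) (.inl ⟨0, hn⟩)
  cases w with
  | @cons _ v _ h _ =>
    rcases v with i | y'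
    · exact ⟨i, by simpa [G.toGraph.adj_comm] using h⟩
    · simp [toGraph] at h

lemma hasHamPath_of_connected_of_zero [DecidableEq Y] {G : ConvexBip 0 Y}
    (hconn : G.toGraph.Connected) : HasHamPath G.toGraph := by
  have : Subsingleton (Fin 0 ⊕ Y) := ⟨fun u v => by
    obtain ⟨w⟩ := hconn.preconnected u v
    cases w with
    | nil => rfl
    | cons h _ => rcases h with ⟨i, _⟩ | ⟨i, _⟩ <;> exact i.elim0⟩
  obtain ⟨v⟩ := hconn.nonempty
  exact ⟨v, v, .nil, .of_subsingleton⟩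

variable (G) in
def adjN (i : ℕ) (y : Y) : Prop := ∃ h : i < n, G.adj ⟨i, h⟩ y

lemma adjN_of_le_of_le {y : Y} {a b c : ℕ} (hab : a ≤ b) (hbc : b ≤ c) (ha : G.adjN a y)
    (hc : G.adjN c y) : G.adjN b y := by
  obtain ⟨ha', ha⟩ := ha
  obtain ⟨hc', hc⟩ := hc
  exact ⟨by omega, G.convex y _ _ _ (Fin.mk_le_mk.2 hab) (Fin.mk_le_mk.2 hbc) ha hc⟩

variable (G) in
/-- Adjacency to the point `k` of the line `x_0, x_0, x_1, …, x_{n-1}, x_{n-1}` (points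
`0, …, n + 1`): point `k` lies over `x_{k-1}`, and the two end vertices are doubled. -/
def extAdj (k : ℕ) (y : Y) : Prop := k ≤ n + 1 ∧ G.adjN (min (k - 1) (n - 1)) y

lemma extAdj_of_le_of_le {y : Y} {a b c : ℕ} (hab : a ≤ b) (hbc : b ≤ c) (ha : G.extAdj a y)
    (hc : G.extAdj c y) : G.extAdj b y :=
  ⟨hbc.trans hc.1, adjN_of_le_of_le (by omega) (by omega) ha.2 hc.2⟩

lemma mem_NIn'_iff_of_val_succ {p q : Fin n} (hpq : (q : ℕ) = p + 1) {y : Y} :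
    y ∈ G.NIn' p q ↔ G.adj p y ∧ G.adj q y := by
  have hne : p ≠ q := fun h => by simp [h] at hpq
  have hsub : {i | G.adj i y ∧ p ≤ i ∧ i ≤ q} ⊆ {p, q} := by
    rintro i ⟨-, hpi, hiq⟩
    rw [Fin.le_def] at hpi hiq
    rcases (by omega : (i : ℕ) = p ∨ (i : ℕ) = q) with h | h
    · exact Or.inl (Fin.ext h)
    · exact Or.inr (Fin.ext h)
  constructor
  · intro hy
    have heq := Set.eq_of_subset_of_ncard_le hsub (by rw [Set.ncard_pair hne]; exact hy)
    have hp : p ∈ {i | G.adj i y ∧ p ≤ i ∧ i ≤ q} := heq ▸ Set.mem_insert p {q}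
    have hq : q ∈ {i | G.adj i y ∧ p ≤ i ∧ i ≤ q} := heq ▸ Set.mem_insert_of_mem p rfl
    exact ⟨hp.1, hq.1⟩
  · rintro ⟨hp, hq⟩
    have hpq' : p ≤ q := Fin.le_def.2 (by omega)
    show 2 ≤ _
    rw [show {i | G.adj i y ∧ p ≤ i ∧ i ≤ q} = {p, q} from
      (hsub.antisymm (by rintro i (rfl | rfl) <;> simp_all)), Set.ncard_pair hne]

lemma degY_eq_one_of_mem_NIn_self (hnbr : ∀ y, ∃ i, G.adj i y) {p : Fin n} {y : Y}
    (hy : y ∈ G.NIn p p) : G.degY y = 1 ∧ G.adj p y := by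
  obtain ⟨i, hi⟩ := hnbr y
  obtain rfl : i = p := le_antisymm (hy i hi).2 (hy i hi).1
  have : {j | G.adj j y} = {i} :=
    Set.eq_singleton_iff_unique_mem.2 ⟨hi, fun j hj => le_antisymm (hy j hj).2 (hy j hj).1⟩
  exact ⟨by simp [degY, this], hi⟩

/-- A tight interval (`|N[X_{p..q}]| = q - p + 1`) strictly inside `X` lies in a maximal one. -/
lemma ncard_NIn_ne_of_interior (hmono : G.IsMonotone) {p q : Fin n} (hp : 0 < (p : ℕ))
    (hpq : p < q) (hq : (q : ℕ) < n - 1) : (G.NIn p q).ncard ≠ q - p + 1 := by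
  induction hk : (p : ℕ) + (n - q) using Nat.strong_induction_on generalizing p q with
  | _ k ih =>
    intro htight
    obtain ⟨p', q', hp', hq', hpp', hqq', hlt, htight'⟩ : ∃ p' q' : Fin n, 0 < (p' : ℕ) ∧
        (q' : ℕ) < n - 1 ∧ p' ≤ p ∧ q ≤ q' ∧ (p' < p ∨ q < q') ∧
        (G.NIn p' q').ncard = q' - p' + 1 := by
      by_contra hno
      exact hmono.2.2 ⟨p, q, hp, hpq, hq, htight, hno⟩
    rw [Fin.le_def] at hpp' hqq'
    rw [Fin.lt_def] at hpq hlt hlt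
    exact ih _ (by omega) hp' (Fin.lt_def.2 (by omega)) hq' rfl htight'

lemma ncard_NIn_le [Finite Y] (hmono : G.IsMonotone) (hnbr : ∀ y, ∃ i, G.adj i y) {p q : Fin n}
    (hpq : p ≤ q) : (G.NIn p q).ncard ≤
      (q - p : ℕ) + (if (p : ℕ) = 0 then 1 else 0) + (if (q : ℕ) = n - 1 then 1 else 0) := by
  have hB := hmono.1
  have hp := p.2
  rw [Fin.le_def] at hpq
  by_cases hfull : (p : ℕ) = 0 ∧ (q : ℕ) = n - 1
  · obtain ⟨hp0, hqn⟩ := hfull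
    have hY := hB.2.1 (by omega)
    rw [show p = ⟨0, by omega⟩ from Fin.ext hp0, show q = ⟨n - 1, by omega⟩ from Fin.ext hqn]
    simp only [if_pos]
    omega
  rcases hpq.lt_or_eq with hlt | heq
  · have hle := hB.1 p q (Fin.lt_def.2 hlt) (by omega)
    by_cases hint : 0 < (p : ℕ) ∧ (q : ℕ) < n - 1
    · have := ncard_NIn_ne_of_interior hmono hint.1 (Fin.lt_def.2 hlt) hint.2
      split_ifs <;> omega
    · split_ifs <;> omega
  · obtain rfl : p = q := Fin.ext heq
    by_cases hint : 0 < (p : ℕ) ∧ (p : ℕ) < n - 1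
    · have hempty : G.NIn p p = ∅ := Set.eq_empty_of_forall_notMem fun y hy =>
        have := degY_eq_one_of_mem_NIn_self hnbr hy
        hmono.2.1 ⟨y, p, this.1, this.2, hint⟩
      simp [hempty]
    · have hle : (G.NIn p p).ncard ≤ 1 := by
        refine (Set.ncard_le_one (Set.toFinite _)).2 fun y hy y' hy' => ?_
        by_contra hne
        have h := degY_eq_one_of_mem_NIn_self hnbr hy
        have h' := degY_eq_one_of_mem_NIn_self hnbr hy'
        exact hB.2.2.2.2 (by omega) p y y' hne h.1 h'.1 h.2 h'.2
      split_ifs <;> omega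

lemma ncard_extAdj_within_le [Finite Y] (hmono : G.IsMonotone) (hnbr : ∀ y, ∃ i, G.adj i y)
    {a b : ℕ} (hab : a ≤ b) (hb : b ≤ n + 1) :
    {y | ∀ k, G.extAdj k y → a ≤ k ∧ k ≤ b}.ncard ≤ b - a := by
  set W := {y | ∀ k, G.extAdj k y → a ≤ k ∧ k ≤ b}
  have hpts : ∀ y ∈ W, ∀ i : Fin n, G.adj i y → a ≤ i + 1 ∧ i + 1 ≤ b ∧
      ((i : ℕ) = 0 → a = 0) ∧ ((i : ℕ) = n - 1 → b = n + 1) := by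
    intro y hy i hi
    have hk : ∀ k, k ≤ n + 1 → min (k - 1) (n - 1) = i → a ≤ k ∧ k ≤ b :=
      fun k hk hmin => hy k ⟨hk, by rw [hmin]; exact ⟨i.2, hi⟩⟩
    have := i.2
    refine ⟨(hk (i + 1) (by omega) (by omega)).1, (hk (i + 1) (by omega) (by omega)).2,
      fun h0 => ?_, fun hlast => ?_⟩
    · have := (hk 0 (by omega) (by omega)).1; omega
    · have := (hk (n + 1) le_rfl (by omega)).2; omega
  rcases W.eq_empty_or_nonempty with hW | ⟨y₀, hy₀⟩
  · simp [hW]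
  obtain ⟨i₀, hi₀⟩ := hnbr y₀
  have h₀ := hpts y₀ hy₀ i₀ hi₀
  have hi₀n := i₀.2
  -- neighbours of `x_0` also see the point `0`, so a window with `a > 0` forces `p ≥ 1`;
  -- symmetrically on the right
  obtain ⟨p, hp⟩ : ∃ p, p = if a = 0 then 0 else max (a - 1) 1 := ⟨_, rfl⟩
  obtain ⟨q, hq⟩ : ∃ q, q = if b = n + 1 then n - 1 else min (b - 1) (n - 2) := ⟨_, rfl⟩
  have hpq : p ≤ i₀ ∧ (i₀ : ℕ) ≤ q ∧ q < n := by split_ifs at hp hq <;> omega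
  have hsub : W ⊆ G.NIn ⟨p, by omega⟩ ⟨q, hpq.2.2⟩ := fun y hy i hi => by
    have := hpts y hy i hi
    have := i.2
    simp only [Fin.le_def]
    split_ifs at hp hq <;> omega
  calc W.ncard ≤ _ := Set.ncard_le_ncard hsub
    _ ≤ _ := ncard_NIn_le hmono hnbr (Fin.le_def.2 (hpq.1.trans hpq.2.1))
    _ ≤ b - a := by dsimp only; split_ifs at hp hq ⊢ <;> omega

variable (G) in
/-- Slot `k` is the gap between the points `k` and `k + 1` of the line of `extAdj`, that is,
between `x_{k-1}` and `x_k`; slots `0` and `n` are the two ends. -/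
def slotAdj (k : ℕ) (y : Y) : Prop := G.extAdj k y ∧ G.extAdj (k + 1) y

lemma adj_of_slotAdj_of_succ_eq {k : ℕ} {y : Y} (h : G.slotAdj k y) {i : Fin n}
    (hi : (i : ℕ) + 1 = k) : G.adj i y := by
  obtain ⟨-, hlt, hadj⟩ := h.1
  rwa [show (⟨_, hlt⟩ : Fin n) = i from Fin.ext (by simp only; omega)] at hadj

lemma adj_of_slotAdj_of_eq {k : ℕ} {y : Y} (h : G.slotAdj k y) {i : Fin n}
    (hi : (i : ℕ) = k) : G.adj i y := by
  obtain ⟨-, hlt, hadj⟩ := h.2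
  rwa [show (⟨_, hlt⟩ : Fin n) = i from Fin.ext (by simp only; omega)] at hadj

lemma slotAdj_iff {k : ℕ} {y : Y} {p q : Fin n} (hp : (p : ℕ) + 1 = k) (hq : (q : ℕ) = k) :
    G.slotAdj k y ↔ G.adj p y ∧ G.adj q y := by
  refine ⟨fun h => ⟨adj_of_slotAdj_of_succ_eq h hp, adj_of_slotAdj_of_eq h hq⟩, ?_⟩
  rintro ⟨hpy, hqy⟩
  have := q.2
  have hp' : min (k - 1) (n - 1) = p := by omega
  have hq' : min (k + 1 - 1) (n - 1) = q := by omega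
  exact ⟨⟨by omega, hp' ▸ ⟨p.2, hpy⟩⟩, ⟨by omega, hq' ▸ ⟨q.2, hqy⟩⟩⟩

lemma ncard_not_slotAdj_add_card_le [Finite Y] (hmono : G.IsMonotone)
    (hnbr : ∀ y, ∃ i, G.adj i y) (S : Finset ℕ) (hS : ∀ k ∈ S, k ≤ n) :
    {y | ∀ k ∈ S, ¬G.slotAdj k y}.ncard + #S ≤ n + 1 := by
  have hsub : {y | ∀ k ∈ S, ¬G.slotAdj k y} ⊆
      {y | (∀ k, G.extAdj k y → k ≤ n + 1) ∧ ∀ k ∈ S, ¬(G.extAdj k y ∧ G.extAdj (k + 1) y)} :=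
    fun y hy => ⟨fun k hk => hk.1, hy⟩
  refine le_trans (Nat.add_le_add_right (Set.ncard_le_ncard hsub) _)
    (ncard_spanning_none_add_card_le G.extAdj (fun _ _ _ _ => extAdj_of_le_of_le)
      (fun _ _ hab hb => ncard_extAdj_within_le hmono hnbr hab hb) S fun k hk => ?_)
  have := hS k hk
  omega

lemma card_le_ncard_slotAdj (hB : G.PropertyB) (S : Finset ℕ) (hS : ∀ k ∈ S, 1 ≤ k ∧ k < n) :
    #S ≤ {y | ∃ k ∈ S, G.slotAdj k y}.ncard := by
  rcases S.eq_empty_or_nonempty with rfl | hne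
  · simp
  set e := S.orderEmbOfFin rfl
  have he : ∀ i, 1 ≤ e i ∧ e i < n := fun i => hS _ (S.orderEmbOfFin_mem rfl i)
  let p : Fin #S → Fin n := fun i => ⟨e i - 1, by have := he i; omega⟩
  let q : Fin #S → Fin n := fun i => ⟨e i, (he i).2⟩
  have hpv : ∀ i, (p i : ℕ) = e i - 1 := fun _ => rfl
  have hqv : ∀ i, (q i : ℕ) = e i := fun _ => rfl
  have hcard : #S ≤ n - 1 := by
    simpa using card_le_card fun k hk => mem_Icc.2 (by have := hS k hk; omega : 1 ≤ k ∧ k ≤ n - 1)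
  have hB2 := hB.2.2.1 #S p q (card_pos.2 hne) hcard
    (fun i => Fin.lt_def.2 (by have := he i; simp only [hpv, hqv]; omega))
    (fun i i' hii' => Fin.le_def.2 (by have := e.strictMono hii'; simp only [hpv, hqv]; omega))
  have hsum : ∑ i, ((q i : ℕ) - p i) = #S := by
    simp only [hpv, hqv]
    rw [Finset.sum_congr rfl fun i _ => (by have := he i; omega : e i - (e i - 1) = 1)]
    simp
  have hmem : ∀ i y, y ∈ G.NIn' (p i) (q i) ↔ G.slotAdj (e i) y := fun i y => by
    rw [slotAdj_iff (k := e i) (p := p i) (q := q i) (by have := he i; simp only [hpv]; omega) rfl]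
    exact mem_NIn'_iff_of_val_succ (by have := he i; simp only [hpv, hqv]; omega)
  have hunion : ⋃ i, G.NIn' (p i) (q i) = {y | ∃ k ∈ S, G.slotAdj k y} := by
    ext y
    simp only [Set.mem_iUnion, hmem]
    constructor
    · rintro ⟨i, hi⟩
      exact ⟨e i, S.orderEmbOfFin_mem rfl i, hi⟩
    · rintro ⟨k, hk, hky⟩
      obtain ⟨i, rfl⟩ : k ∈ Set.range e := by rwa [range_orderEmbOfFin]
      exact ⟨i, hky⟩
  rwa [hsum, hunion] at hB2

variable (G) in
/-- An end slot may also hold an element of `D`, which stands for leaving it empty. -/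
def SlotRel (D : Type*) (k : Fin (n + 1)) : Y ⊕ D → Prop
  | .inl y => G.slotAdj k y
  | .inr _ => k = 0 ∨ k = Fin.last n

/-- Hall's condition: when `A` contains an end slot it follows from the counting bound
`ncard_not_slotAdj_add_card_le`, otherwise from Property B (2). -/
lemma card_le_ncard_slotRel [Finite Y] {D : Type*} [Finite D] (hmono : G.IsMonotone)
    (hnbr : ∀ y, ∃ i, G.adj i y) (hD : Nat.card Y + Nat.card D = n + 1)
    (A : Finset (Fin (n + 1))) : #A ≤ {b | ∃ a ∈ A, G.SlotRel D a b}.ncard := by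
  set N := {b | ∃ a ∈ A, G.SlotRel D a b}
  set S := A.map Fin.valEmbedding
  have hS : #S = #A := card_map _
  by_cases hend : (0 : Fin (n + 1)) ∈ A ∨ Fin.last n ∈ A
  · have hsub : Nᶜ ⊆ Sum.inl '' {y | ∀ k ∈ S, ¬G.slotAdj k y} := by
      rintro (y | d) hb
      · refine ⟨y, fun k hk hky => hb ?_, rfl⟩
        obtain ⟨a, ha, rfl⟩ := mem_map.1 hk
        exact ⟨a, ha, hky⟩
      · rcases hend with h | h
        · exact (hb ⟨_, h, Or.inl rfl⟩).elim
        · exact (hb ⟨_, h, Or.inr rfl⟩).elim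
    have hcompl := Set.ncard_add_ncard_compl N
    have havoid := ncard_not_slotAdj_add_card_le hmono hnbr S (by simp [S]; omega)
    have := (Set.ncard_le_ncard hsub).trans Set.ncard_image_le
    rw [Nat.card_sum] at hcompl
    omega
  · have hsub : Sum.inl '' {y | ∃ k ∈ S, G.slotAdj k y} ⊆ N := by
      rintro _ ⟨y, ⟨k, hk, hky⟩, rfl⟩
      obtain ⟨a, ha, rfl⟩ := mem_map.1 hk
      exact ⟨a, ha, hky⟩
    have hinner : ∀ k ∈ S, 1 ≤ k ∧ k < n := by
      simp only [S, mem_map, Fin.valEmbedding_apply, forall_exists_index, and_imp]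
      rintro _ a ha rfl
      have h0 : (a : ℕ) ≠ 0 := fun h => hend (Or.inl ((Fin.ext h : a = 0) ▸ ha))
      have hl : (a : ℕ) ≠ n := fun h => hend (Or.inr ((Fin.ext h : a = Fin.last n) ▸ ha))
      have := a.2
      omega
    calc #A = #S := hS.symm
      _ ≤ _ := card_le_ncard_slotAdj hmono.1 S hinner
      _ = _ := (Set.ncard_image_of_injective _ Sum.inl_injective).symm
      _ ≤ N.ncard := Set.ncard_le_ncard hsub

lemma exists_bijective_slotRel [Finite Y] (hmono : G.IsMonotone) (hnbr : ∀ y, ∃ i, G.adj i y) :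
    ∃ f : Fin (n + 1) → Y ⊕ Fin (n + 1 - Nat.card Y),
      Function.Bijective f ∧ ∀ k, G.SlotRel _ k (f k) := by
  classical
  have := Fintype.ofFinite Y
  have hY : Nat.card Y ≤ n + 1 := by
    simpa using ncard_not_slotAdj_add_card_le hmono hnbr ∅ (by simp)
  have hD : Nat.card Y + Nat.card (Fin (n + 1 - Nat.card Y)) = n + 1 := by
    rw [Nat.card_eq_fintype_card (α := Fin _), Fintype.card_fin]; omega
  obtain ⟨f, hinj, hf⟩ := (Fintype.all_card_le_filter_rel_iff_exists_injective
      (G.SlotRel (Fin (n + 1 - Nat.card Y)))).1 fun A =>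
    (card_le_ncard_slotRel hmono hnbr hD A).trans_eq (by simp [← Set.ncard_coe_finset])
  refine ⟨f, (Fintype.bijective_iff_injective_and_card f).2 ⟨hinj, ?_⟩, hf⟩
  rw [Fintype.card_fin, ← Nat.card_eq_fintype_card, Nat.card_sum, hD]

section SlotSeq

variable {D : Type*} (f : Fin (n + 1) → Y ⊕ D)

def slotList (k : Fin (n + 1)) : List (Fin n ⊕ Y) := (f k).elim (fun y => [.inr y]) fun _ => []

/-- The vertex sequence `y_0? x_0 y_1 x_1 ⋯ y_{n-1} x_{n-1} y_n?` of a filling `f` of the slots. -/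
def slotSeq : List (Fin n ⊕ Y) :=
  slotList f 0 ++ (List.ofFn fun i : Fin n => .inl i :: slotList f i.succ).flatten

variable {f}

lemma slotList_of_eq_inl {k : Fin (n + 1)} {y : Y} (h : f k = .inl y) :
    slotList f k = [.inr y] := by
  simp [slotList, h]

lemma slotList_of_eq_inr {k : Fin (n + 1)} {d : D} (h : f k = .inr d) : slotList f k = [] := by
  simp [slotList, h]

lemma mem_slotList {k : Fin (n + 1)} {v : Fin n ⊕ Y} :
    v ∈ slotList f k ↔ ∃ y, f k = .inl y ∧ v = .inr y := by
  rcases h : f k with y | d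
  · simp [slotList_of_eq_inl h]
  · simp [slotList_of_eq_inr h]

lemma nodup_slotList (k : Fin (n + 1)) : (slotList f k).Nodup := by
  rcases h : f k with y | d
  · simp [slotList_of_eq_inl h]
  · simp [slotList_of_eq_inr h]

lemma mem_cons_slotList_succ {i : Fin n} {v : Fin n ⊕ Y} :
    v ∈ (.inl i :: slotList f i.succ) ↔ v = .inl i ∨ ∃ y, f i.succ = .inl y ∧ v = .inr y := by
  rw [List.mem_cons, mem_slotList]

lemma mem_slotSeq (hf : Function.Surjective f) (v : Fin n ⊕ Y) : v ∈ slotSeq f := by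
  rcases v with i | y
  · exact List.mem_append_right _ (List.mem_flatten.2 ⟨_, List.mem_ofFn.2 ⟨i, rfl⟩, by simp⟩)
  · obtain ⟨k, hk⟩ := hf (.inl y)
    cases k using Fin.cases with
    | zero => exact List.mem_append_left _ (mem_slotList.2 ⟨y, hk, rfl⟩)
    | succ i =>
      exact List.mem_append_right _ (List.mem_flatten.2
        ⟨_, List.mem_ofFn.2 ⟨i, rfl⟩, mem_cons_slotList_succ.2 (Or.inr ⟨y, hk, rfl⟩)⟩)

lemma nodup_slotSeq (hf : Function.Injective f) : (slotSeq f).Nodup := by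
  rw [slotSeq, List.nodup_append, List.nodup_flatten, List.pairwise_ofFn]
  refine ⟨nodup_slotList 0, ⟨?_, fun i j hij => ?_⟩, ?_⟩
  · intro l hl
    obtain ⟨i, rfl⟩ := List.mem_ofFn.1 hl
    exact List.nodup_cons.2 ⟨by simp [mem_slotList], nodup_slotList _⟩
  · intro v hvi hvj
    rw [mem_cons_slotList_succ] at hvi hvj
    rcases hvi with rfl | ⟨y, hy, rfl⟩ <;> rcases hvj with h | ⟨y', hy', h⟩
    · exact hij.ne (Sum.inl_injective h)
    · simp at h
    · simp at h
    · obtain rfl := Sum.inr_injective h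
      exact hij.ne (Fin.succ_injective _ (hf (hy.trans hy'.symm)))
  · rintro _ ha b hb rfl
    obtain ⟨y, hy, rfl⟩ := mem_slotList.1 ha
    obtain ⟨l, hl, hal⟩ := List.mem_flatten.1 hb
    obtain ⟨i, rfl⟩ := List.mem_ofFn.1 hl
    obtain ⟨y', hy', hyy'⟩ := (mem_cons_slotList_succ.1 hal).resolve_left (by simp)
    obtain rfl := Sum.inr_injective hyy'
    exact Fin.succ_ne_zero i (hf (hy'.trans hy.symm))

lemma isChain_slotSeq (hn : 0 < n) (hrel : ∀ k, G.SlotRel D k (f k)) :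
    (slotSeq f).IsChain G.toGraph.Adj := by
  have hadj : ∀ k y, f k = .inl y → G.slotAdj k y := fun k y h => by
    simpa [h, SlotRel] using hrel k
  have hinner : ∀ i : Fin n, (i : ℕ) + 1 < n → ∃ y, f i.succ = .inl y := fun i hi => by
    rcases h : f i.succ with y | d
    · exact ⟨y, rfl⟩
    · have := hrel i.succ
      simp [h, SlotRel, Fin.ext_iff] at this
      omega
  rw [slotSeq, List.isChain_append, List.isChain_flatten (by simp)]
  refine ⟨?_, ⟨?_, ?_⟩, ?_⟩
  · rcases h : f 0 with y | d
    · simp [slotList_of_eq_inl h]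
    · simp [slotList_of_eq_inr h]
  · intro l hl
    obtain ⟨i, rfl⟩ := List.mem_ofFn.1 hl
    rcases h : f i.succ with y | d
    · simp [slotList_of_eq_inl h, adj_of_slotAdj_of_succ_eq (i := i) (hadj _ _ h) (by simp)]
    · simp [slotList_of_eq_inr h]
  · rw [List.isChain_ofFn]
    intro i hi
    obtain ⟨y, hy⟩ := hinner ⟨i, by omega⟩ hi
    rw [slotList_of_eq_inl hy]
    simpa using adj_of_slotAdj_of_eq (i := ⟨i + 1, hi⟩) (hadj _ _ hy) (by simp)
  · rcases h : f 0 with y | d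
    · obtain ⟨m, rfl⟩ : ∃ m, n = m + 1 := ⟨n - 1, by omega⟩
      simpa [slotList_of_eq_inl h, List.ofFn_succ] using
        adj_of_slotAdj_of_eq (i := 0) (hadj _ _ h) rfl
    · simp [slotList_of_eq_inr h]

end SlotSeq

lemma hasHamPath_of_bijective_slotRel [DecidableEq Y] {D : Type*} (hn : 0 < n)
    {f : Fin (n + 1) → Y ⊕ D} (hf : Function.Bijective f) (hrel : ∀ k, G.SlotRel D k (f k)) :
    HasHamPath G.toGraph :=
  hasHamPath_of_isChain (slotSeq f) (List.ne_nil_of_mem (mem_slotSeq hf.2 (.inl ⟨0, hn⟩)))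
    (isChain_slotSeq hn hrel) (nodup_slotSeq hf.1) (mem_slotSeq hf.2)

end ConvexBip

/-- every monotone convex bipartite graph has a Hamiltonian path. -/
theorem stmt_8 {n : ℕ} {Y : Type*} [Fintype Y] [DecidableEq Y]
    (G : ConvexBip n Y) (hconn : G.toGraph.Connected) (hmono : G.IsMonotone) :
    ConvexBip.HasHamPath G.toGraph := by
  rcases Nat.eq_zero_or_pos n with rfl | hn
  · exact ConvexBip.hasHamPath_of_connected_of_zero hconn
  obtain ⟨f, hf, hrel⟩ :=
    ConvexBip.exists_bijective_slotRel hmono (ConvexBip.exists_adj_of_connected hconn hn)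
  exact ConvexBip.hasHamPath_of_bijective_slotRel hn hf hrel
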